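/- Let ρ(u) = √(u(4−u))/(2πu) for u ∈ (0,4] (the Marchenko–Pastur density) and let L > 0. Then as t → 0⁺, L − ∫₀⁴ max( L·ρ(u) − t/(2π), 0 ) du = 2t/π + O(t³); in particular lim_{t→0⁺} (1/t)·( L − ∫₀⁴ max( L·ρ(u) − t/(2π), 0 ) du ) = 2/π. -/

import Mathlib

open MeasureTheory Real Filter Asymptotics

/-- The Marchenko–Pastur density `ρ(u) = √(u(4−u))/(2πu)` on `(0, 4]`. -/
noncomputable def rhoMP (u : ℝ) : ℝ :=
  Real.sqrt (u * (4 - u)) / (2 * Real.pi * u)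

/-!
The integrand `max (Lρ(u) - t/(2π)) 0` is positive exactly for `u < 4/(1 + (t/L)²)`, and
`(arcsin (u/2 - 1) + √(u(4-u))/2)/π` is an antiderivative of `ρ`. At that edge
`arcsin (u/2 - 1) = π/2 - 2 arctan (t/L)` and the algebraic terms cancel, so the form factor is
exactly `(2L/π) arctan (t/L)`; the claim is then `arctan x = x + O(x³)`.
-/

open Set Topology

namespace Real

theorem self_sub_arctan_eq_integral (x : ℝ) :
    x - arctan x = ∫ s in (0:ℝ)..x, s ^ 2 / (1 + s ^ 2) := by
  have hsplit : ∀ s : ℝ, s ^ 2 / (1 + s ^ 2) = 1 - 1 / (1 + s ^ 2) := fun s => by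
    field_simp; ring
  have hint : IntervalIntegrable (fun s : ℝ => 1 / (1 + s ^ 2)) volume 0 x :=
    (continuous_const.div (by fun_prop) fun s => by positivity).intervalIntegrable 0 x
  simp_rw [hsplit]
  rw [intervalIntegral.integral_sub intervalIntegrable_const hint, integral_one_div_one_add_sq]
  simp

theorem abs_self_sub_arctan_le_of_nonneg {x : ℝ} (hx : 0 ≤ x) :
    |x - arctan x| ≤ x ^ 3 / 3 := by
  have hcont : Continuous fun s : ℝ => s ^ 2 / (1 + s ^ 2) :=
    (continuous_pow 2).div (by fun_prop) fun s => by positivity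
  rw [self_sub_arctan_eq_integral,
    abs_of_nonneg (intervalIntegral.integral_nonneg hx fun s _ => by positivity)]
  calc ∫ s in (0:ℝ)..x, s ^ 2 / (1 + s ^ 2)
      ≤ ∫ s in (0:ℝ)..x, s ^ 2 :=
        intervalIntegral.integral_mono_on hx (hcont.intervalIntegrable 0 x)
          ((continuous_pow 2).intervalIntegrable 0 x) fun s _ =>
          div_le_self (sq_nonneg s) (le_add_of_nonneg_right (sq_nonneg s))
    _ = x ^ 3 / 3 := by norm_num [integral_pow]

theorem abs_self_sub_arctan_le (x : ℝ) : |x - arctan x| ≤ |x| ^ 3 / 3 := by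
  rcases le_total 0 x with hx | hx
  · simpa [abs_of_nonneg hx] using abs_self_sub_arctan_le_of_nonneg hx
  · have h := abs_self_sub_arctan_le_of_nonneg (neg_nonneg.2 hx)
    rwa [arctan_neg, sub_neg_eq_add, neg_add_eq_sub, abs_sub_comm, ← abs_of_nonpos hx] at h

theorem isBigO_arctan_sub_self :
    (fun x => arctan x - x) =O[𝓝 0] fun x => x ^ 3 :=
  isBigO_of_le' (c := 1 / 3) _ fun x => by
    rw [norm_eq_abs, abs_sub_comm, norm_pow, norm_eq_abs]
    linarith [abs_self_sub_arctan_le x]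

theorem arcsin_one_sub_sq_div_one_add_sq {x : ℝ} (hx : 0 ≤ x) :
    arcsin ((1 - x ^ 2) / (1 + x ^ 2)) = π / 2 - 2 * arctan x := by
  have hsin : sin (π / 2 - 2 * arctan x) = (1 - x ^ 2) / (1 + x ^ 2) := by
    rw [sin_pi_div_two_sub, cos_two_mul, cos_sq_arctan]
    field_simp; ring
  rw [← hsin, arcsin_sin] <;>
    linarith [arctan_nonneg.2 hx, arctan_lt_pi_div_two x]

end Real

-- The substitution `u = 2 + 2 sin θ` turns `ρ(u) du` into `(1 - sin θ) dθ / π`.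
noncomputable def rhoMPAntideriv (u : ℝ) : ℝ :=
  (arcsin (u / 2 - 1) + √(u * (4 - u)) / 2) / π

theorem continuous_rhoMPAntideriv : Continuous rhoMPAntideriv := by
  unfold rhoMPAntideriv
  fun_prop

theorem rhoMPAntideriv_zero : rhoMPAntideriv 0 = -1 / 2 := by
  rw [rhoMPAntideriv, zero_div, zero_sub, arcsin_neg_one, zero_mul, sqrt_zero, zero_div, add_zero]
  field_simp

theorem hasDerivAt_rhoMPAntideriv {u : ℝ} (hu0 : 0 < u) (hu4 : u < 4) :
    HasDerivAt rhoMPAntideriv (rhoMP u) u := by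
  have hpos : 0 < u * (4 - u) := by nlinarith
  set s := √(u * (4 - u))
  have hs : 0 < s := sqrt_pos.2 hpos
  have hs2 : s ^ 2 = u * (4 - u) := sq_sqrt hpos.le
  have hcos : √(1 - (u / 2 - 1) ^ 2) = s / 2 := by
    rw [show 1 - (u / 2 - 1) ^ 2 = (s / 2) ^ 2 by rw [div_pow, hs2]; ring, sqrt_sq (by positivity)]
  have harcsin :
      HasDerivAt (fun v => arcsin (v / 2 - 1)) (1 / √(1 - (u / 2 - 1) ^ 2) * (1 / 2)) u :=
    (hasDerivAt_arcsin (by linarith) (by linarith)).comp u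
      (((hasDerivAt_id u).div_const 2).sub_const 1)
  have hsqrt : HasDerivAt (fun v => √(v * (4 - v))) ((1 * (4 - u) + u * (0 - 1)) / (2 * s)) u :=
    ((hasDerivAt_id u).mul ((hasDerivAt_const u 4).sub (hasDerivAt_id u))).sqrt hpos.ne'
  refine ((harcsin.add (hsqrt.div_const 2)).div_const π).congr_deriv ?_
  rw [hcos, rhoMP]
  field_simp
  linear_combination (-2) * hs2

theorem rhoMP_nonneg {u : ℝ} (hu : 0 ≤ u) : 0 ≤ rhoMP u := by
  unfold rhoMP
  positivity

theorem intervalIntegrable_rhoMP {b : ℝ} (hb0 : 0 ≤ b) (hb4 : b ≤ 4) :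
    IntervalIntegrable rhoMP volume 0 b := by
  refine intervalIntegral.intervalIntegrable_deriv_of_nonneg
    continuous_rhoMPAntideriv.continuousOn ?_ ?_ <;>
      intro u hu <;> rw [min_eq_left hb0, max_eq_right hb0] at hu
  exacts [hasDerivAt_rhoMPAntideriv hu.1 (hu.2.trans_le hb4), rhoMP_nonneg hu.1.le]

theorem integral_rhoMP {b : ℝ} (hb0 : 0 ≤ b) (hb4 : b ≤ 4) :
    ∫ u in (0:ℝ)..b, rhoMP u = rhoMPAntideriv b - rhoMPAntideriv 0 :=
  intervalIntegral.integral_eq_sub_of_hasDerivAt_of_le hb0 continuous_rhoMPAntideriv.continuousOn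
    (fun _ hu => hasDerivAt_rhoMPAntideriv hu.1 (hu.2.trans_le hb4))
    (intervalIntegrable_rhoMP hb0 hb4)

theorem rhoMPAntideriv_four_div_one_add_sq {x : ℝ} (hx : 0 ≤ x) :
    rhoMPAntideriv (4 / (1 + x ^ 2)) = 1 / 2 - 2 / π * arctan x + 2 * x / (π * (1 + x ^ 2)) := by
  have hd : 0 < 1 + x ^ 2 := by positivity
  have harg : 4 / (1 + x ^ 2) / 2 - 1 = (1 - x ^ 2) / (1 + x ^ 2) := by
    field_simp; ring
  have hsqrt : √(4 / (1 + x ^ 2) * (4 - 4 / (1 + x ^ 2))) = 4 * x / (1 + x ^ 2) := by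
    rw [show 4 / (1 + x ^ 2) * (4 - 4 / (1 + x ^ 2)) = (4 * x / (1 + x ^ 2)) ^ 2 by
      field_simp; ring, sqrt_sq (by positivity)]
  rw [rhoMPAntideriv, harg, hsqrt, arcsin_one_sub_sq_div_one_add_sq hx]
  field_simp
  ring

theorem le_rhoMP_iff {x u : ℝ} (hx : 0 ≤ x) (hu0 : 0 < u) (hu4 : u ≤ 4) :
    x / (2 * π) ≤ rhoMP u ↔ u ≤ 4 / (1 + x ^ 2) := by
  rw [rhoMP, le_div_iff₀ (by positivity), show x / (2 * π) * (2 * π * u) = x * u by field_simp,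
    le_sqrt (by positivity) (by nlinarith), le_div_iff₀ (by positivity)]
  constructor <;> intro h <;> nlinarith

theorem integral_max_rhoMP_sub {x : ℝ} (hx : 0 ≤ x) :
    ∫ u in (0:ℝ)..4, max (rhoMP u - x / (2 * π)) 0 = 1 - 2 / π * arctan x := by
  set a := 4 / (1 + x ^ 2)
  have ha0 : 0 < a := by positivity
  have ha4 : a ≤ 4 := div_le_self (by norm_num) (le_add_of_nonneg_right (sq_nonneg x))
  have hpos : EqOn (fun u => max (rhoMP u - x / (2 * π)) 0) (fun u => rhoMP u - x / (2 * π))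
      (Ioc 0 a) := fun u hu =>
    max_eq_left (sub_nonneg.2 ((le_rhoMP_iff hx hu.1 (hu.2.trans ha4)).2 hu.2))
  have hzero : EqOn (fun u => max (rhoMP u - x / (2 * π)) 0) 0 (Ioc a 4) := fun u hu =>
    max_eq_right (sub_nonpos.2
      (not_le.1 (mt (le_rhoMP_iff hx (ha0.trans hu.1) hu.2).1 (not_le.2 hu.1))).le)
  have hint : IntervalIntegrable (fun u => rhoMP u - x / (2 * π)) volume 0 a :=
    (intervalIntegrable_rhoMP ha0.le ha4).sub intervalIntegrable_const
  have hint₁ : IntervalIntegrable (fun u => max (rhoMP u - x / (2 * π)) 0) volume 0 a := by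
    rw [intervalIntegrable_iff_integrableOn_Ioc_of_le ha0.le] at hint ⊢
    exact hint.congr_fun hpos.symm measurableSet_Ioc
  have hint₂ : IntervalIntegrable (fun u => max (rhoMP u - x / (2 * π)) 0) volume a 4 := by
    rw [intervalIntegrable_iff_integrableOn_Ioc_of_le ha4]
    exact integrableOn_zero.congr_fun hzero.symm measurableSet_Ioc
  calc ∫ u in (0:ℝ)..4, max (rhoMP u - x / (2 * π)) 0
      = (∫ u in (0:ℝ)..a, max (rhoMP u - x / (2 * π)) 0)
          + ∫ u in a..4, max (rhoMP u - x / (2 * π)) 0 :=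
        (intervalIntegral.integral_add_adjacent_intervals hint₁ hint₂).symm
    _ = (∫ u in (0:ℝ)..a, (rhoMP u - x / (2 * π))) + ∫ u in a..4, (0 : ℝ) := by
        congr 1 <;> refine intervalIntegral.integral_congr_ae (ae_of_all _ fun u hu => ?_)
        exacts [hpos (uIoc_of_le ha0.le ▸ hu), hzero (uIoc_of_le ha4 ▸ hu)]
    _ = rhoMPAntideriv a - rhoMPAntideriv 0 - x / (2 * π) * a := by
        rw [intervalIntegral.integral_sub (intervalIntegrable_rhoMP ha0.le ha4)
            intervalIntegrable_const, integral_rhoMP ha0.le ha4, intervalIntegral.integral_zero,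
          intervalIntegral.integral_const, smul_eq_mul]
        ring
    _ = 1 - 2 / π * arctan x := by
        rw [rhoMPAntideriv_four_div_one_add_sq hx, rhoMPAntideriv_zero]
        simp only [a]
        field_simp
        ring

noncomputable def lueFormFactor (L t : ℝ) : ℝ :=
  L - ∫ u in (0:ℝ)..4, max (L * rhoMP u - t / (2 * π)) 0

theorem lueFormFactor_eq {L t : ℝ} (hL : 0 < L) (ht : 0 ≤ t) :
    lueFormFactor L t = 2 * L / π * arctan (t / L) := by
  have hscale (u : ℝ) :
      max (L * rhoMP u - t / (2 * π)) 0 = L * max (rhoMP u - t / L / (2 * π)) 0 := by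
    rw [mul_max_of_nonneg _ _ hL.le, mul_zero, mul_sub]
    field_simp
  simp_rw [lueFormFactor, hscale, intervalIntegral.integral_const_mul,
    integral_max_rhoMP_sub (div_nonneg ht hL.le)]
  ring

/-- Early-time behavior of the refined connected two-point form factor of the LUE:
as `t → 0⁺`, `L − ∫₀⁴ max(Lρ(u) − t/(2π), 0) du = 2t/π + O(t³)`; in particular
`lim_{t→0⁺} (1/t)(L − ∫₀⁴ max(Lρ(u) − t/(2π), 0) du) = 2/π`. -/
theorem lue_refined_form_factor_slope (L : ℝ) (hL : 0 < L) :
    ((fun t : ℝ =>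
        (L - ∫ u in (0:ℝ)..4, max (L * rhoMP u - t / (2 * Real.pi)) 0) - 2 * t / Real.pi)
      =O[nhdsWithin 0 (Set.Ioi 0)] (fun t : ℝ => t^3)) ∧
    Tendsto (fun t : ℝ =>
        (1 / t) * (L - ∫ u in (0:ℝ)..4, max (L * rhoMP u - t / (2 * Real.pi)) 0))
      (nhdsWithin 0 (Set.Ioi 0)) (nhds (2 / Real.pi)) := by
  have hdev : (fun t => lueFormFactor L t - 2 * t / π) =ᶠ[𝓝[>] 0]
      fun t => 2 * L / π * (arctan (t / L) - t / L) := by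
    filter_upwards [self_mem_nhdsWithin] with t ht
    rw [lueFormFactor_eq hL (le_of_lt ht)]
    field_simp
  have hscale : Tendsto (fun t => t / L) (𝓝[>] 0) (𝓝 0) := by
    simpa using ((continuous_id.div_const L).tendsto 0).mono_left nhdsWithin_le_nhds
  have hcubic : (fun t => lueFormFactor L t - 2 * t / π) =O[𝓝[>] 0] fun t => t ^ 3 := by
    refine IsBigO.congr' ?_ hdev.symm EventuallyEq.rfl
    calc (fun t => 2 * L / π * (arctan (t / L) - t / L)) =O[𝓝[>] 0] fun t => (t / L) ^ 3 :=
          (isBigO_arctan_sub_self.comp_tendsto hscale).const_mul_left _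
      _ =O[𝓝[>] 0] fun t => t ^ 3 :=
          (isBigO_const_mul_self (L ^ 3)⁻¹ _ _).congr_left fun t => by ring
  refine ⟨hcubic, ?_⟩
  have hlin : (fun t => lueFormFactor L t - 2 * t / π) =o[𝓝[>] 0] fun t => t :=
    hcubic.trans_isLittleO ((isLittleO_pow_id (by norm_num)).mono nhdsWithin_le_nhds)
  have hslope := hlin.tendsto_div_nhds_zero.add_const (2 / π)
  rw [zero_add] at hslope
  refine hslope.congr' ?_
  filter_upwards [self_mem_nhdsWithin] with t (ht : 0 < t)
  change _ = 1 / t * lueFormFactor L t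
  field_simp
  ring
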